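/- Let β ∈ (1,2] and let w be a β-Lyndon word such that the set {n ≥ 1 : σ^n(α(β)) ≼ w^∞} is nonempty (so the extended β-Lyndon interval generated by w is not a β-Lyndon interval), and let m := min{n ≥ 1 : σ^n(α(β)) ≼ w^∞}. Then the left endpoint t_L^* := π_β(w^-(α_1⋯α_m^-)^∞) of the extended β-Lyndon interval generated by w belongs to 𝓔_β. -/

import Mathlib

open scoped Classical ENNReal
open MeasureTheory Filter

noncomputable section

/-- The β-transformation `x ↦ βx (mod 1)` on `[0,1)`. -/
def Tbeta (β : ℝ) (x : ℝ) : ℝ := Int.fract (β * x)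

/-- The survivor set `K_β(t)`. -/
def Kset (β t : ℝ) : Set ℝ :=
  {x | x ∈ Set.Ico (0 : ℝ) 1 ∧ ∀ n : ℕ, t ≤ (Tbeta β)^[n] x}

/-- The bifurcation set `𝓔_β`. -/
def Eset (β : ℝ) : Set ℝ :=
  {t | t ∈ Set.Ico (0 : ℝ) 1 ∧ ∀ t' ∈ Set.Ioo t 1, Kset β t' ≠ Kset β t}

/-- The dimension bifurcation set `𝓑_β`. -/
def Bset (β : ℝ) : Set ℝ :=
  {t | t ∈ Set.Ico (0 : ℝ) 1 ∧ ∀ t' ∈ Set.Ioo t 1, dimH (Kset β t') < dimH (Kset β t)}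

/-- The critical value `τ(β) = min{t ∈ (0,1) : dim_H K_β(t) = 0}`. -/
def tau (β : ℝ) : ℝ := sInf {t | t ∈ Set.Ioo (0 : ℝ) 1 ∧ dimH (Kset β t) = 0}

/-- Strict lexicographic order on sequences. -/
def seqLt (a b : ℕ → ℕ) : Prop := ∃ n, (∀ i < n, a i = b i) ∧ a n < b n

/-- Lexicographic order on sequences. -/
def seqLe (a b : ℕ → ℕ) : Prop := seqLt a b ∨ a = b

/-- The left shift map `σ`. -/
def shift (a : ℕ → ℕ) : ℕ → ℕ := fun n => a (n + 1)

/-- Prepend a digit to a sequence. -/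
def consSeq (c : ℕ) (a : ℕ → ℕ) : ℕ → ℕ := fun n => if n = 0 then c else a (n - 1)

/-- The projection `π_β`. -/
def piBeta (β : ℝ) (a : ℕ → ℕ) : ℝ := ∑' i : ℕ, (a i : ℝ) / β ^ (i + 1)

/-- `a` is the quasi-greedy expansion of `1` in base `β`: a `{0,1}`-sequence with
`π_β(a) = 1` and `0^∞ ≺ σ^n(a) ≼ a` for all `n ≥ 1`. -/
def IsQuasiGreedy (β : ℝ) (a : ℕ → ℕ) : Prop :=
  (∀ i, a i ≤ 1) ∧ piBeta β a = 1 ∧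
    ∀ n : ℕ, 1 ≤ n → seqLt (fun _ => 0) (shift^[n] a) ∧ seqLe (shift^[n] a) a

/-- The periodic sequence `w^∞`. -/
def periodic (w : List ℕ) : ℕ → ℕ := fun n => w.getD (n % w.length) 0

/-- The word `w` followed by the sequence `a`. -/
def wordThen (w : List ℕ) (a : ℕ → ℕ) : ℕ → ℕ :=
  fun n => if n < w.length then w.getD n 0 else a (n - w.length)

/-- The sequence `w0^∞`. -/
def wordZero (w : List ℕ) : ℕ → ℕ := wordThen w (fun _ => 0)

/-- `w^-`: change the last letter of `w` to `0`. -/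
def wordMinus (w : List ℕ) : List ℕ := w.dropLast ++ [0]

/-- `w^+`: change the last letter of `w` to `1`. -/
def wordPlus (w : List ℕ) : List ℕ := w.dropLast ++ [1]

/-- The word `a_1 ⋯ a_m` (first `m` digits of the sequence `a`). -/
def prefixWord (a : ℕ → ℕ) (m : ℕ) : List ℕ := (List.range m).map a

/-- A Lyndon word: a `{0,1}`-word of length at least `2` which is lexicographically
strictly smaller than every nontrivial cyclic rotation of itself. -/
def IsLyndon (w : List ℕ) : Prop :=
  2 ≤ w.length ∧ (∀ c ∈ w, c ≤ 1) ∧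
    ∀ k, 0 < k → k < w.length → List.Lex (· < ·) w (w.rotate k)

/-- A `β`-Lyndon word (with respect to the quasi-greedy expansion `a = α(β)`):
a Lyndon word with `σ^n(w^∞) ≺ α(β)` for all `n ≥ 0`. -/
def IsBetaLyndon (a : ℕ → ℕ) (w : List ℕ) : Prop :=
  IsLyndon w ∧ ∀ n : ℕ, seqLt (shift^[n] (periodic w)) a

/-- The block of the substitution `U_0 : 0 ↦ 0, 1 ↦ 01`. -/
def substBlock0 (c : ℕ) : List ℕ := if c = 0 then [0] else [0, 1]

/-- The block of the substitution `U_1 : 0 ↦ 01, 1 ↦ 1`. -/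
def substBlock1 (c : ℕ) : List ℕ := if c = 0 then [0, 1] else [1]

/-- Apply a letterwise substitution to a finite word. -/
def substWord (f : ℕ → List ℕ) (w : List ℕ) : List ℕ := (w.map f).flatten

def U0word : List ℕ → List ℕ := substWord substBlock0
def U1word : List ℕ → List ℕ := substWord substBlock1

/-- Apply a letterwise substitution (with nonempty blocks) to an infinite sequence. -/
def substSeq (f : ℕ → List ℕ) (a : ℕ → ℕ) : ℕ → ℕ :=
  fun n => (((List.range (n + 1)).map fun i => f (a i)).flatten).getD n 0

def U0seq : (ℕ → ℕ) → ℕ → ℕ := substSeq substBlock0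
def U1seq : (ℕ → ℕ) → ℕ → ℕ := substSeq substBlock1

/-- Farey words of length at least 2: the smallest set of words containing `01`
and closed under `U_0` and `U_1`. -/
inductive IsFarey : List ℕ → Prop
  | base : IsFarey [0, 1]
  | u0 {w : List ℕ} : IsFarey w → IsFarey (U0word w)
  | u1 {w : List ℕ} : IsFarey w → IsFarey (U1word w)

/-- `L(w)`: the lexicographically largest cyclic rotation of `w`. -/
def maxRot (w : List ℕ) : List ℕ :=
  ((List.range w.length).map (w.rotate ·)).foldl
    (fun acc r => if List.Lex (· < ·) acc r then r else acc) w

/-- A sequence is balanced if any two factors of equal length have numbers of `1`s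
differing by at most `1`. -/
def BalancedSeq (a : ℕ → ℕ) : Prop :=
  ∀ i₁ i₂ n : ℕ, (∑ j ∈ Finset.range n, a (i₁ + j)) ≤ (∑ j ∈ Finset.range n, a (i₂ + j)) + 1

/-- A sequence is eventually periodic. -/
def EventuallyPeriodic (a : ℕ → ℕ) : Prop :=
  ∃ m p : ℕ, 1 ≤ p ∧ shift^[m + p] a = shift^[m] a

/-- A Sturmian sequence: balanced and not eventually periodic. -/
def Sturmian (a : ℕ → ℕ) : Prop := BalancedSeq a ∧ ¬ EventuallyPeriodic a

/-- The subshift `K̃_β(w) = {z : w^∞ ≼ σ^n(z) ≼ α(β) ∀ n ≥ 0}`, where `a = α(β)`. -/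
def Ktilde (a : ℕ → ℕ) (w : List ℕ) : Set (ℕ → ℕ) :=
  {z | (∀ i, z i ≤ 1) ∧ ∀ n : ℕ, seqLe (periodic w) (shift^[n] z) ∧ seqLe (shift^[n] z) a}

/-- A finite word `u` occurs as a factor of a sequence `z`. -/
def FactorOf (u : List ℕ) (z : ℕ → ℕ) : Prop :=
  ∃ i, ∀ j < u.length, u.getD j 0 = z (i + j)

/-- A set of sequences is transitive: any word of its language can be connected
to any of its elements. -/
def SubshiftTransitive (X : Set (ℕ → ℕ)) : Prop :=
  ∀ u : List ℕ, (∃ z ∈ X, FactorOf u z) → ∀ z ∈ X, ∃ v : List ℕ, wordThen (u ++ v) z ∈ X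

/-- `β ∈ Ē`: for no Farey word `s` does `L(s)^∞ ≺ α(β) ≺ L(s)^+ s^∞` hold. -/
def InEbar (a : ℕ → ℕ) : Prop :=
  ∀ s : List ℕ, IsFarey s →
    ¬ (seqLt (periodic (maxRot s)) a ∧ seqLt a (wordThen (wordPlus (maxRot s)) (periodic s)))

/-- `β ∈ E_L`: for no Farey word `s` does `L(s)^∞ ≺ α(β) ≼ L(s)^+ s^∞` hold. -/
def InEL (a : ℕ → ℕ) : Prop :=
  ∀ s : List ℕ, IsFarey s →
    ¬ (seqLt (periodic (maxRot s)) a ∧ seqLe a (wordThen (wordPlus (maxRot s)) (periodic s)))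

/-- `β ∈ E`: for no Farey word `s` does `L(s)^∞ ≼ α(β) ≼ L(s)^+ s^∞` hold. -/
def InE (a : ℕ → ℕ) : Prop :=
  ∀ s : List ℕ, IsFarey s →
    ¬ (seqLe (periodic (maxRot s)) a ∧ seqLe a (wordThen (wordPlus (maxRot s)) (periodic s)))

/-- `m(w) = min{n ≥ 1 : σ^n(α(β)) ≼ w^∞}` (where `a = α(β)`). -/
def ebliCutoff (a : ℕ → ℕ) (w : List ℕ) : ℕ :=
  sInf {n | 1 ≤ n ∧ seqLe (shift^[n] a) (periodic w)}

/-- The extended `β`-Lyndon interval generated by a `β`-Lyndon word `w`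
(where `a = α(β)`). -/
def EBLI (β : ℝ) (a : ℕ → ℕ) (w : List ℕ) : Set ℝ :=
  if ∃ n : ℕ, 1 ≤ n ∧ seqLe (shift^[n] a) (periodic w) then
    Set.Icc
      (piBeta β (wordThen (wordMinus w) (periodic (wordMinus (prefixWord a (ebliCutoff a w))))))
      (piBeta β (periodic w))
  else
    Set.Icc (piBeta β (wordZero w)) (piBeta β (periodic w))

/-- A plateau of `f`: a maximal nondegenerate subinterval of `[0,1)` on which `f`
is constant. -/
def IsPlateau (f : ℝ → ℝ≥0∞) (P : Set ℝ) : Prop :=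
  P ⊆ Set.Ico 0 1 ∧ P.OrdConnected ∧ (∃ x ∈ P, ∃ y ∈ P, x < y) ∧
    (∀ x ∈ P, ∀ y ∈ P, f x = f y) ∧
    ∀ Q : Set ℝ, Q ⊆ Set.Ico 0 1 → Q.OrdConnected →
      (∀ x ∈ Q, ∀ y ∈ Q, f x = f y) → P ⊆ Q → Q = P

/-! ### Auxiliary lemmas -/

lemma shift_iter_apply (x : ℕ → ℕ) (n i : ℕ) : shift^[n] x i = x (n + i) := by
  induction n generalizing i with
  | zero => simp
  | succ n ih =>
    rw [Function.iterate_succ_apply']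
    show (shift^[n] x) (i+1) = _
    rw [ih]
    congr 1
    omega

lemma seqLe_refl (x : ℕ → ℕ) : seqLe x x := Or.inr rfl

lemma seqLt_irrefl (x : ℕ → ℕ) : ¬ seqLt x x := by
  rintro ⟨n, -, h⟩; exact lt_irrefl _ h

lemma seqLt_trans {x y z : ℕ → ℕ} (h1 : seqLt x y) (h2 : seqLt y z) : seqLt x z := by
  obtain ⟨d1, hp1, hd1⟩ := h1
  obtain ⟨d2, hp2, hd2⟩ := h2
  rcases lt_trichotomy d1 d2 with h | h | h
  · exact ⟨d1, fun i hi => (hp1 i hi).trans (hp2 i (hi.trans h)), (hp2 d1 h) ▸ hd1⟩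
  · subst h
    exact ⟨d1, fun i hi => (hp1 i hi).trans (hp2 i hi), hd1.trans hd2⟩
  · exact ⟨d2, fun i hi => (hp1 i (hi.trans h)).trans (hp2 i hi), (hp1 d2 h) ▸ hd2⟩

lemma seqLt_of_le_of_lt {x y z : ℕ → ℕ} (h1 : seqLe x y) (h2 : seqLt y z) : seqLt x z := by
  rcases h1 with h1 | rfl
  · exact seqLt_trans h1 h2
  · exact h2

lemma seqLt_of_lt_of_le {x y z : ℕ → ℕ} (h1 : seqLt x y) (h2 : seqLe y z) : seqLt x z := by
  rcases h2 with h2 | rfl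
  · exact seqLt_trans h1 h2
  · exact h1

lemma seqLe_trans {x y z : ℕ → ℕ} (h1 : seqLe x y) (h2 : seqLe y z) : seqLe x z := by
  rcases h1 with h1 | rfl
  · exact Or.inl (seqLt_of_lt_of_le h1 h2)
  · exact h2

lemma seqLt_asymm {x y : ℕ → ℕ} (h1 : seqLt x y) (h2 : seqLt y x) : False :=
  seqLt_irrefl x (seqLt_trans h1 h2)

lemma seq_trichotomy (x y : ℕ → ℕ) : seqLt x y ∨ x = y ∨ seqLt y x := by
  by_cases h : ∃ n, x n ≠ y n
  · classical
    let n := Nat.find h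
    have hn : x n ≠ y n := Nat.find_spec h
    have hpre : ∀ i < n, x i = y i := fun i hi => by
      by_contra hc; exact absurd (Nat.find_le hc : n ≤ i) (by omega)
    rcases lt_or_gt_of_ne hn with hlt | hgt
    · exact Or.inl ⟨n, hpre, hlt⟩
    · exact Or.inr (Or.inr ⟨n, fun i hi => (hpre i hi).symm, hgt⟩)
  · push_neg at h
    exact Or.inr (Or.inl (funext h))

/-- If two sequences agree on a prefix and the shifted tails compare, so do they. -/
lemma seqLe_of_agree_shift {x y : ℕ → ℕ} (c : ℕ) (hpre : ∀ i < c, x i = y i)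
    (h : seqLe (shift^[c] x) (shift^[c] y)) : seqLe x y := by
  rcases h with ⟨d, hp, hd⟩ | heq
  · refine Or.inl ⟨c + d, fun i hi => ?_, ?_⟩
    · rcases lt_or_ge i c with h' | h'
      · exact hpre i h'
      · have := hp (i - c) (by omega)
        rw [shift_iter_apply, shift_iter_apply] at this
        have hic : c + (i - c) = i := by omega
        rwa [hic] at this
    · rw [shift_iter_apply, shift_iter_apply] at hd; exact hd
  · refine Or.inr (funext fun i => ?_)
    rcases lt_or_ge i c with h' | h'
    · exact hpre i h'
    · have := congrFun heq (i - c)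
      rw [shift_iter_apply, shift_iter_apply] at this
      have hic : c + (i - c) = i := by omega
      rwa [hic] at this

lemma periodic_add (u : List ℕ) (i : ℕ) : periodic u (i + u.length) = periodic u i := by
  simp [periodic, Nat.add_mod_right]

lemma periodic_mod (u : List ℕ) (i : ℕ) : periodic u i = periodic u (i % u.length) := by
  simp [periodic, Nat.mod_mod_of_dvd, Nat.mod_mod]

lemma shift_periodic (u : List ℕ) (n : ℕ) :
    shift^[n] (periodic u) = shift^[n % u.length] (periodic u) := by
  funext i
  rw [shift_iter_apply, shift_iter_apply, periodic_mod, periodic_mod u (n % u.length + i)]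
  congr 1
  conv_lhs => rw [Nat.add_mod]
  conv_rhs => rw [Nat.add_mod, Nat.mod_mod]

lemma shift_periodic_len (u : List ℕ) : shift^[u.length] (periodic u) = periodic u := by
  funext i
  rw [shift_iter_apply, Nat.add_comm, periodic_add]

/-- Extract the first-difference form from `List.Lex`. -/
lemma lex_firstdiff : ∀ (l₁ l₂ : List ℕ), List.Lex (· < ·) l₁ l₂ →
    (∃ j < l₁.length, (∀ i < j, l₁.getD i 0 = l₂.getD i 0) ∧ l₁.getD j 0 < l₂.getD j 0) ∨
    (l₁.length < l₂.length ∧ ∀ i < l₁.length, l₁.getD i 0 = l₂.getD i 0) := by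
  intro l₁
  induction l₁ with
  | nil =>
    intro l₂ h
    cases h with
    | nil => exact Or.inr ⟨by simp, by simp⟩
  | cons x t ih =>
    intro l₂ h
    cases h with
    | rel hr => exact Or.inl ⟨0, by simp, by simp, by simpa using hr⟩
    | cons h' =>
      rcases ih _ h' with ⟨j, hj, hpre, hd⟩ | ⟨hl, hpre⟩
      · exact Or.inl ⟨j + 1, by simpa using Nat.succ_lt_succ hj,
          fun i hi => by cases i with
            | zero => simp
            | succ i => simpa using hpre i (by omega),
          by simpa using hd⟩
      · refine Or.inr ⟨by simpa using Nat.succ_lt_succ hl, fun i hi => ?_⟩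
        cases i with
        | zero => simp
        | succ i => simpa using hpre i (by simpa using hi)
lemma mod_sub_of_lt (x p : ℕ) (h1 : p ≤ x) (h2 : x < 2*p) : x % p = x - p := by
  rw [Nat.mod_eq_sub_mod h1, Nat.mod_eq_of_lt (by omega)]

lemma length_wordMinus {w : List ℕ} (h : 1 ≤ w.length) : (wordMinus w).length = w.length := by
  simp [wordMinus]; omega

lemma getD_wordMinus {w : List ℕ} {i : ℕ} (h1 : i < w.length - 1) :
    (wordMinus w).getD i 0 = w.getD i 0 := by
  have h2 : i < w.dropLast.length := by simp; omega
  have h3 : i < w.length := by omega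
  rw [wordMinus, List.getD_eq_getElem _ _ (by simp; omega), List.getElem_append_left h2,
    List.getElem_dropLast, List.getD_eq_getElem _ _ h3]

lemma getD_wordMinus_last {w : List ℕ} (h : 1 ≤ w.length) :
    (wordMinus w).getD (w.length - 1) 0 = 0 := by
  have h2 : w.dropLast.length = w.length - 1 := by simp
  rw [wordMinus, List.getD_eq_getElem _ _ (by simp),
    List.getElem_append_right (by omega)]
  simp

lemma getD_rotate (w : List ℕ) (k i : ℕ) (hp : 0 < w.length) (hi : i < w.length) :
    (w.rotate k).getD i 0 = w.getD ((i + k) % w.length) 0 := by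
  have h1 : i < (w.rotate k).length := by simpa using hi
  rw [List.getD_eq_getElem _ _ h1, List.getElem_rotate]
  exact (List.getD_eq_getElem _ _ (Nat.mod_lt _ hp)).symm

lemma length_prefixWord (a : ℕ → ℕ) (m : ℕ) : (prefixWord a m).length = m := by
  simp [prefixWord]

lemma getD_prefixWord {a : ℕ → ℕ} {m i : ℕ} (h : i < m) : (prefixWord a m).getD i 0 = a i := by
  rw [prefixWord, List.getD_eq_getElem _ _ (by simpa using h)]
  simp

lemma periodic_of_lt {u : List ℕ} {i : ℕ} (h : i < u.length) : periodic u i = u.getD i 0 := by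
  rw [periodic, Nat.mod_eq_of_lt h]

section Lyndon

variable {w : List ℕ} (hp : 2 ≤ w.length)
  (hrot : ∀ k, 0 < k → k < w.length → List.Lex (· < ·) w (w.rotate k))

include hp hrot in
lemma lyndon_firstdiff (k : ℕ) (h0 : 0 < k) (hk : k < w.length) :
    ∃ j < w.length, (∀ i < j, w.getD i 0 = w.getD ((i + k) % w.length) 0) ∧
      w.getD j 0 < w.getD ((j + k) % w.length) 0 := by
  have hlen : w.length = (w.rotate k).length := (List.length_rotate w k).symm
  rcases lex_firstdiff w (w.rotate k) (hrot k h0 hk) with ⟨j, hj, hpre, hd⟩ | ⟨hl, -⟩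
  · refine ⟨j, hj, fun i hi => ?_, ?_⟩
    · have := hpre i hi
      rwa [getD_rotate w k i (by omega) (by omega)] at this
    · rwa [getD_rotate w k j (by omega) (by omega)] at hd
  · rw [List.length_rotate] at hl; omega

include hp hrot in
lemma lyndon_ge_head (k : ℕ) (hk : k < w.length) : w.getD 0 0 ≤ w.getD k 0 := by
  rcases Nat.eq_zero_or_pos k with rfl | h0
  · exact le_rfl
  by_contra hlt
  push_neg at hlt
  obtain ⟨j, hj, hpre, hd⟩ := lyndon_firstdiff hp hrot k h0 hk
  rcases Nat.eq_zero_or_pos j with rfl | hj0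
  · rw [Nat.mod_eq_of_lt (by omega : 0 + k < w.length), Nat.zero_add] at hd
    omega
  · have := hpre 0 hj0
    rw [Nat.mod_eq_of_lt (by omega : 0 + k < w.length), Nat.zero_add] at this
    omega

include hp hrot in
lemma lyndon_head_lt : ∃ k, k < w.length ∧ w.getD 0 0 < w.getD k 0 := by
  obtain ⟨j, hj, -, hd⟩ := lyndon_firstdiff hp hrot 1 one_pos (by omega)
  have hjk : (j + 1) % w.length < w.length := Nat.mod_lt _ (by omega)
  exact ⟨(j + 1) % w.length, hjk,
    lt_of_le_of_lt (lyndon_ge_head hp hrot j hj) hd⟩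

variable (hwb : ∀ c ∈ w, c ≤ 1)

omit hrot in
include hwb in
lemma lyndon_getD_le (i : ℕ) : w.getD i 0 ≤ 1 := by
  rcases lt_or_ge i w.length with h | h
  · rw [List.getD_eq_getElem _ _ h]; exact hwb _ (List.getElem_mem h)
  · rw [List.getD_eq_default _ _ h]; omega

include hp hrot hwb in
lemma lyndon_head_eq_zero : w.getD 0 0 = 0 := by
  obtain ⟨k, hk, hlt⟩ := lyndon_head_lt hp hrot
  have h1 := lyndon_getD_le hwb k
  omega

include hp hrot hwb in
lemma lyndon_last_eq_one : w.getD (w.length - 1) 0 = 1 := by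
  obtain ⟨j, hj, hpre, hd⟩ := lyndon_firstdiff hp hrot (w.length - 1) (by omega) (by omega)
  have h0 : w.getD 0 0 = 0 := lyndon_head_eq_zero hp hrot hwb
  rcases Nat.eq_zero_or_pos j with rfl | hj0
  · rw [Nat.mod_eq_of_lt (by omega : 0 + (w.length - 1) < w.length), Nat.zero_add] at hd
    have := lyndon_getD_le hwb (w.length - 1)
    have := lyndon_head_eq_zero hp hrot hwb
    omega
  · -- show wd i = wd 0 for all i ≤ j - 1, contradiction with hd
    have key : ∀ i ≤ j - 1, w.getD i 0 = 0 := by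
      intro i hi
      induction i with
      | zero => exact h0
      | succ i ih =>
        have h1 := hpre (i + 1) (by omega)
        rw [mod_sub_of_lt _ _ (by omega) (by omega)] at h1
        have : i + 1 + (w.length - 1) - w.length = i := by omega
        rw [this] at h1
        rw [h1]; exact ih (by omega)
    have h1 : (j + (w.length - 1)) % w.length = j - 1 := by
      rw [mod_sub_of_lt _ _ (by omega) (by omega)]; omega
    rw [h1, key (j-1) le_rfl] at hd
    have := lyndon_ge_head hp hrot j hj
    omega

include hp hrot in
lemma lyndon_suffix (n : ℕ) (h0 : 0 < n) (hn : n < w.length) :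
    ∃ j, j < w.length - n ∧ (∀ i < j, w.getD i 0 = w.getD (n + i) 0) ∧
      w.getD j 0 < w.getD (n + j) 0 := by
  obtain ⟨j₀, hj₀, hpre, hd⟩ := lyndon_firstdiff hp hrot n h0 hn
  set p := w.length with hpdef
  rcases lt_or_ge j₀ (p - n) with hcase | hcase
  · refine ⟨j₀, hcase, fun i hi => ?_, ?_⟩
    · have := hpre i hi
      rwa [Nat.mod_eq_of_lt (by omega), Nat.add_comm i n] at this
    · rwa [Nat.mod_eq_of_lt (by omega), Nat.add_comm j₀ n] at hd
  · -- border case: contradiction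
    exfalso
    set ℓ := p - n with hℓdef
    have hℓ0 : 0 < ℓ := by omega
    have hℓp : ℓ < p := by omega
    have hdiff : w.getD ((j₀ - ℓ) + ℓ) 0 < w.getD (j₀ - ℓ) 0 := by
      have e1 : (j₀ - ℓ) + ℓ = j₀ := by omega
      have e2 : (j₀ + n) % p = j₀ - ℓ := by
        rw [mod_sub_of_lt _ _ (by omega) (by omega)]; omega
      rw [e1, ← e2]; exact hd
    have hpre2 : ∀ i < j₀ - ℓ, w.getD (i + ℓ) 0 = w.getD i 0 := by
      intro i hi
      have h1 := hpre (i + ℓ) (by omega)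
      have e : (i + ℓ + n) % p = i := by
        have : i + ℓ + n = i + p := by omega
        rw [this, Nat.add_mod_right, Nat.mod_eq_of_lt (by omega)]
      rw [e] at h1
      exact h1
    obtain ⟨j₁, hj₁, hpre1, hd1⟩ := lyndon_firstdiff hp hrot ℓ hℓ0 hℓp
    set j' := j₀ - ℓ with hj'def
    have hj'n : j' < p - ℓ := by omega
    rcases lt_trichotomy j₁ j' with hc | hc | hc
    · have h1 := hpre2 j₁ hc
      rw [Nat.mod_eq_of_lt (by omega)] at hd1
      omega
    · subst hc
      rw [Nat.mod_eq_of_lt (by omega)] at hd1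
      omega
    · have h1 := hpre1 j' hc
      rw [Nat.mod_eq_of_lt (by omega)] at h1
      omega

end Lyndon
section PiLemmas

variable {β : ℝ} (hβ : 1 < β)

include hβ in
lemma summable_pi (x : ℕ → ℕ) (hx : ∀ i, x i ≤ 1) :
    Summable (fun i : ℕ => (x i : ℝ) / β ^ (i + 1)) := by
  have hb0 : (0:ℝ) < β := by linarith
  have hr0 : (0:ℝ) ≤ 1/β := by positivity
  have hr1 : 1/β < 1 := by rw [div_lt_one hb0]; exact hβ
  refine Summable.of_nonneg_of_le (fun i => by positivity) (fun i => ?_)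
    ((summable_geometric_of_lt_one hr0 hr1).mul_right (1/β))
  have h1 : (x i : ℝ) ≤ 1 := by exact_mod_cast hx i
  calc (x i : ℝ) / β ^ (i+1) ≤ 1 / β ^ (i+1) := by gcongr
    _ = (1/β)^i * (1/β) := by rw [← pow_succ, one_div_pow]

lemma pi_nonneg (x : ℕ → ℕ) (hb : 0 < β) : 0 ≤ piBeta β x :=
  tsum_nonneg fun i => by positivity

include hβ in
lemma pi_shift (x : ℕ → ℕ) (hx : ∀ i, x i ≤ 1) :
    piBeta β x = (x 0 : ℝ) / β + piBeta β (shift x) / β := by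
  have hs := summable_pi hβ x hx
  rw [piBeta, Summable.tsum_eq_zero_add hs]
  congr 1
  · norm_num
  · rw [piBeta, ← tsum_div_const]
    congr 1
    funext i
    show (x (i+1) : ℝ) / β ^ (i + 1 + 1) = (x (i+1) : ℝ) / β ^ (i+1) / β
    rw [div_div, ← pow_succ]

omit hβ in
lemma shift_bound {x : ℕ → ℕ} (hx : ∀ i, x i ≤ 1) (d : ℕ) : ∀ i, shift^[d] x i ≤ 1 :=
  fun i => by rw [shift_iter_apply]; exact hx _

include hβ in
lemma pi_eq_sum_add (x : ℕ → ℕ) (hx : ∀ i, x i ≤ 1) (d : ℕ) :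
    piBeta β x = (∑ i ∈ Finset.range d, (x i : ℝ) / β ^ (i+1))
      + piBeta β (shift^[d] x) / β ^ d := by
  have hb0 : (0:ℝ) < β := by linarith
  induction d with
  | zero => simp
  | succ d ih =>
    rw [ih, Finset.sum_range_succ]
    have h1 : piBeta β (shift^[d] x) =
        (x d : ℝ) / β + piBeta β (shift^[d+1] x) / β := by
      rw [Function.iterate_succ_apply']
      have := pi_shift hβ (shift^[d] x) (shift_bound hx d)
      rwa [shift_iter_apply, Nat.add_zero] at this
    rw [h1]
    have hbne : (β:ℝ) ≠ 0 := ne_of_gt hb0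
    field_simp
    ring

include hβ in
lemma pi_agree_sub {x y : ℕ → ℕ} (hx : ∀ i, x i ≤ 1) (hy : ∀ i, y i ≤ 1) (d : ℕ)
    (hagree : ∀ i < d, x i = y i) :
    piBeta β x - piBeta β y = (piBeta β (shift^[d] x) - piBeta β (shift^[d] y)) / β ^ d := by
  rw [pi_eq_sum_add hβ x hx d, pi_eq_sum_add hβ y hy d]
  have : ∑ i ∈ Finset.range d, (x i : ℝ) / β ^ (i+1)
      = ∑ i ∈ Finset.range d, (y i : ℝ) / β ^ (i+1) := by
    refine Finset.sum_congr rfl fun i hi => ?_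
    rw [hagree i (Finset.mem_range.mp hi)]
  rw [this]
  ring

include hβ in
lemma pi_le_M (x : ℕ → ℕ) (hx : ∀ i, x i ≤ 1) : piBeta β x ≤ 1/(β-1) := by
  have hb0 : (0:ℝ) < β := by linarith
  have hr0 : (0:ℝ) ≤ 1/β := by positivity
  have hr1 : 1/β < 1 := by rw [div_lt_one hb0]; exact hβ
  have h1 : piBeta β x ≤ ∑' i : ℕ, (1/β)^i * (1/β) := by
    refine Summable.tsum_le_tsum (fun i => ?_) (summable_pi hβ x hx)
      ((summable_geometric_of_lt_one hr0 hr1).mul_right (1/β))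
    have h1 : (x i : ℝ) ≤ 1 := by exact_mod_cast hx i
    calc (x i : ℝ) / β ^ (i+1) ≤ 1 / β ^ (i+1) := by gcongr
      _ = (1/β)^i * (1/β) := by rw [← pow_succ, one_div_pow]
  have h2 : ∑' i : ℕ, (1/β)^i * (1/β) = 1/(β-1) := by
    rw [tsum_mul_right, tsum_geometric_of_lt_one hr0 hr1]
    have hbne : β ≠ 0 := ne_of_gt hb0
    have hbm1 : β - 1 ≠ 0 := by intro h; apply hbne; linarith [sub_eq_zero.mp h]
    field_simp
  linarith

end PiLemmas
section PiAdm

variable {β : ℝ} (hβ : 1 < β) {a : ℕ → ℕ} (ha1 : ∀ i, a i ≤ 1) (hpa : piBeta β a = 1)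

include hβ ha1 hpa in
lemma pi_le_one_aux : ∀ N : ℕ, ∀ x : ℕ → ℕ, (∀ i, x i ≤ 1) →
    (∀ n : ℕ, seqLe (shift^[n] x) a) → piBeta β x ≤ 1 + (1/(β-1)) / β ^ N := by
  have hb0 : (0:ℝ) < β := by linarith
  have hM0 : (0:ℝ) ≤ 1/(β-1) := le_of_lt (div_pos one_pos (by linarith))
  intro N
  induction N with
  | zero =>
    intro x hx hxa
    have := pi_le_M hβ x hx
    simp only [pow_zero, div_one]
    linarith
  | succ N ih =>
    intro x hx hxa
    have h0 := hxa 0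
    rw [Function.iterate_zero_apply] at h0
    rcases h0 with ⟨d, hpre, hd⟩ | heq
    · -- first difference at d : x d = 0, a d = 1
      have hxd : x d = 0 := by have := ha1 d; omega
      have had : a d = 1 := by have := ha1 d; omega
      -- piBeta x = sum_{i<d} a_i/β^{i+1} + piBeta (σ^{d+1} x)/β^{d+1}
      have e1 : piBeta β x = (∑ i ∈ Finset.range d, (a i : ℝ) / β ^ (i+1))
          + piBeta β (shift^[d+1] x) / β ^ (d+1) := by
        rw [pi_eq_sum_add hβ x hx (d+1), Finset.sum_range_succ, hxd]
        have : ∑ i ∈ Finset.range d, (x i : ℝ) / β ^ (i+1)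
            = ∑ i ∈ Finset.range d, (a i : ℝ) / β ^ (i+1) :=
          Finset.sum_congr rfl fun i hi => by rw [hpre i (Finset.mem_range.mp hi)]
        rw [this]
        norm_num
      have e2 : (∑ i ∈ Finset.range d, (a i : ℝ) / β ^ (i+1)) ≤ 1 - 1/β^(d+1) := by
        have h3 : piBeta β a = (∑ i ∈ Finset.range (d+1), (a i : ℝ) / β ^ (i+1))
            + piBeta β (shift^[d+1] a) / β ^ (d+1) := pi_eq_sum_add hβ a ha1 (d+1)
        rw [hpa, Finset.sum_range_succ, had] at h3
        have h4 : 0 ≤ piBeta β (shift^[d+1] a) / β ^ (d+1) := by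
          have := pi_nonneg (β := β) (shift^[d+1] a) hb0
          positivity
        have h5 : ((1:ℕ) : ℝ) / β ^ (d+1) = 1/β^(d+1) := by norm_num
        rw [h5] at h3
        linarith
      have hshift : ∀ n : ℕ, seqLe (shift^[n] (shift^[d+1] x)) a := by
        intro n
        rw [← Function.iterate_add_apply]
        exact hxa (n + (d+1))
      have e3 := ih (shift^[d+1] x) (shift_bound hx (d+1)) hshift
      have hpow : (0:ℝ) < β ^ (d+1) := by positivity
      have e4 : piBeta β (shift^[d+1] x) / β ^ (d+1) ≤ (1 + (1/(β-1))/β^N) / β^(d+1) := by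
        gcongr
      have e5 : (1 + (1/(β-1))/β^N) / β^(d+1) = 1/β^(d+1) + (1/(β-1))/β^(N+(d+1)) := by
        rw [add_div, div_div, ← pow_add]
      have e6 : (1/(β-1))/β^(N+(d+1)) ≤ (1/(β-1))/β^(N+1) := by
        gcongr
        · exact hβ.le
        · omega
      rw [e1]
      linarith
    · rw [heq, hpa]
      have : (0:ℝ) ≤ (1/(β-1))/β^(N+1) := by positivity
      linarith

include hβ ha1 hpa in
lemma pi_le_one {x : ℕ → ℕ} (hx : ∀ i, x i ≤ 1)
    (hxa : ∀ n : ℕ, seqLe (shift^[n] x) a) : piBeta β x ≤ 1 := by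
  have hb0 : (0:ℝ) < β := by linarith
  by_contra hcon
  push_neg at hcon
  have hM0 : (0:ℝ) < 1/(β-1) := div_pos one_pos (by linarith)
  have hr0 : (0:ℝ) ≤ 1/β := by positivity
  have hr1 : 1/β < 1 := by rw [div_lt_one hb0]; exact hβ
  have hε : (0:ℝ) < (piBeta β x - 1) / (1/(β-1)) := div_pos (by linarith) hM0
  obtain ⟨N, hN⟩ := exists_pow_lt_of_lt_one hε hr1
  have h1 := pi_le_one_aux hβ ha1 hpa N x hx hxa
  have h2 : (1/(β-1)) / β ^ N = (1/(β-1)) * (1/β)^N := by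
    rw [one_div_pow]; ring
  have h3 : (1/(β-1)) * (1/β)^N < (1/(β-1)) * ((piBeta β x - 1) / (1/(β-1))) := by
    exact mul_lt_mul_of_pos_left hN hM0
  have h4 : (1/(β-1)) * ((piBeta β x - 1) / (1/(β-1))) = piBeta β x - 1 := by
    rw [mul_comm]; exact div_mul_cancel₀ _ (ne_of_gt hM0)
  rw [h4] at h3
  rw [h2] at h1
  linarith

include hβ in
lemma pi_pos {x : ℕ → ℕ} (hx : ∀ i, x i ≤ 1) (h : seqLt (fun _ => 0) x) :
    0 < piBeta β x := by
  have hb0 : (0:ℝ) < β := by linarith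
  obtain ⟨d, -, hd⟩ := h
  have hterm : (0:ℝ) < (x d : ℝ) / β ^ (d+1) := by
    have : (1:ℝ) ≤ (x d : ℝ) := by exact_mod_cast hd
    positivity
  have := Summable.le_tsum (summable_pi hβ x hx) d (fun i _ => by positivity)
  calc (0:ℝ) < (x d : ℝ) / β ^ (d+1) := hterm
    _ ≤ piBeta β x := this

include hβ ha1 hpa in
lemma pi_lt_one {x : ℕ → ℕ} (hx : ∀ i, x i ≤ 1)
    (haq : ∀ n : ℕ, 1 ≤ n → seqLt (fun _ => 0) (shift^[n] a))
    (hstrict : ∀ n : ℕ, seqLt (shift^[n] x) a) : piBeta β x < 1 := by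
  have hb0 : (0:ℝ) < β := by linarith
  obtain ⟨d, hpre, hd⟩ := by
    have := hstrict 0
    rwa [Function.iterate_zero_apply] at this
  have hxd : x d = 0 := by have := ha1 d; omega
  have had : a d = 1 := by have := ha1 d; omega
  have key : piBeta β a - piBeta β x
      = (piBeta β (shift^[d] a) - piBeta β (shift^[d] x)) / β ^ d :=
    pi_agree_sub hβ ha1 hx d (fun i hi => (hpre i hi).symm)
  have ea : piBeta β (shift^[d] a) = (1:ℝ)/β + piBeta β (shift^[d+1] a) / β := by
    have h := pi_shift hβ (shift^[d] a) (shift_bound ha1 d)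
    rw [shift_iter_apply, Nat.add_zero, had, ← Function.iterate_succ_apply' shift d a] at h
    exact_mod_cast h
  have ex : piBeta β (shift^[d] x) = piBeta β (shift^[d+1] x) / β := by
    have h := pi_shift hβ (shift^[d] x) (shift_bound hx d)
    rw [shift_iter_apply, Nat.add_zero, hxd, ← Function.iterate_succ_apply' shift d x] at h
    simpa using h
  have hpos : 0 < piBeta β (shift^[d+1] a) :=
    pi_pos hβ (shift_bound ha1 (d+1)) (haq (d+1) (by omega))
  have hle1 : piBeta β (shift^[d+1] x) ≤ 1 := by
    refine pi_le_one hβ ha1 hpa (shift_bound hx (d+1)) (fun n => ?_)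
    rw [← Function.iterate_add_apply]
    exact Or.inl (hstrict (n + (d+1)))
  have hnum : 0 < piBeta β (shift^[d] a) - piBeta β (shift^[d] x) := by
    rw [ea, ex]
    have h7 : piBeta β (shift^[d+1] x) / β ≤ 1 / β := by gcongr
    have h8 : 0 < piBeta β (shift^[d+1] a) / β := by positivity
    linarith
  have : 0 < piBeta β a - piBeta β x := by
    rw [key]
    positivity
  linarith [hpa ▸ this]

include hβ ha1 hpa in
lemma pi_le_of_seqLe {x y : ℕ → ℕ} (hx : ∀ i, x i ≤ 1) (hy : ∀ i, y i ≤ 1)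
    (hxa : ∀ n : ℕ, seqLe (shift^[n] x) a) (hle : seqLe x y) :
    piBeta β x ≤ piBeta β y := by
  have hb0 : (0:ℝ) < β := by linarith
  rcases hle with ⟨d, hpre, hd⟩ | rfl
  · have key : piBeta β y - piBeta β x
        = (piBeta β (shift^[d] y) - piBeta β (shift^[d] x)) / β ^ d :=
      pi_agree_sub hβ hy hx d (fun i hi => (hpre i hi).symm)
    have ey : piBeta β (shift^[d] y) = (y d : ℝ)/β + piBeta β (shift^[d+1] y) / β := by
      have h := pi_shift hβ (shift^[d] y) (shift_bound hy d)
      rwa [shift_iter_apply, Nat.add_zero, ← Function.iterate_succ_apply' shift d _] at h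
    have ex : piBeta β (shift^[d] x) = (x d : ℝ)/β + piBeta β (shift^[d+1] x) / β := by
      have h := pi_shift hβ (shift^[d] x) (shift_bound hx d)
      rwa [shift_iter_apply, Nat.add_zero, ← Function.iterate_succ_apply' shift d _] at h
    have hgap : (x d : ℝ) + 1 ≤ (y d : ℝ) := by exact_mod_cast hd
    have hle1 : piBeta β (shift^[d+1] x) ≤ 1 := by
      refine pi_le_one hβ ha1 hpa (shift_bound hx (d+1)) (fun n => ?_)
      rw [← Function.iterate_add_apply]
      exact hxa (n + (d+1))
    have hy0 : 0 ≤ piBeta β (shift^[d+1] y) := pi_nonneg _ hb0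
    have hnum : 0 ≤ piBeta β (shift^[d] y) - piBeta β (shift^[d] x) := by
      rw [ey, ex]
      have h7 : piBeta β (shift^[d+1] x) / β ≤ 1 / β := by gcongr
      have h8 : 0 ≤ piBeta β (shift^[d+1] y) / β := by positivity
      have h9 : (x d : ℝ)/β + 1/β ≤ (y d : ℝ)/β := by
        rw [← add_div]; gcongr
      linarith
    have : 0 ≤ piBeta β y - piBeta β x := by
      rw [key]
      positivity
    linarith
  · exact le_rfl

end PiAdm
/-! ### Digit lemmas for the sequences V and Z -/

/-- `V = (a_1 ⋯ a_m^-)^∞`. -/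
def Vseq (a : ℕ → ℕ) (m : ℕ) : ℕ → ℕ := periodic (wordMinus (prefixWord a m))

/-- `Z = w^- V`. -/
def Zseq (w : List ℕ) (a : ℕ → ℕ) (m : ℕ) : ℕ → ℕ := wordThen (wordMinus w) (Vseq a m)

section Digits

variable {a : ℕ → ℕ} {w : List ℕ} {m : ℕ}

lemma length_v (hm : 1 ≤ m) : (wordMinus (prefixWord a m)).length = m := by
  rw [length_wordMinus (by rw [length_prefixWord]; omega), length_prefixWord]

lemma Vseq_lt (hm : 1 ≤ m) {i : ℕ} (h : i < m - 1) : Vseq a m i = a i := by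
  rw [Vseq, periodic_of_lt (by rw [length_v hm]; omega),
    getD_wordMinus (by rw [length_prefixWord]; omega), getD_prefixWord (by omega)]

lemma Vseq_last (hm : 1 ≤ m) : Vseq a m (m - 1) = 0 := by
  have h := getD_wordMinus_last (w := prefixWord a m) (by rw [length_prefixWord]; omega)
  rw [length_prefixWord] at h
  rw [Vseq, periodic_of_lt (by rw [length_v hm]; omega), h]

lemma Vseq_le (hm : 1 ≤ m) (ha1 : ∀ i, a i ≤ 1) (i : ℕ) : Vseq a m i ≤ 1 := by
  have h1 : i % m < m := Nat.mod_lt _ (by omega)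
  have h2 : Vseq a m i = Vseq a m (i % m) := by
    rw [Vseq, periodic_mod, length_v hm]
  rcases Nat.lt_or_ge (i % m) (m-1) with h | h
  · rw [h2, Vseq_lt hm h]; exact ha1 _
  · have : i % m = m - 1 := by omega
    rw [h2, this, Vseq_last hm]; omega

lemma Vseq_shift_mod (hm : 1 ≤ m) (n : ℕ) :
    shift^[n] (Vseq a m) = shift^[n % m] (Vseq a m) := by
  have := shift_periodic (wordMinus (prefixWord a m)) n
  rwa [length_v hm] at this

lemma Vseq_shift_len (hm : 1 ≤ m) : shift^[m] (Vseq a m) = Vseq a m := by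
  have := shift_periodic_len (wordMinus (prefixWord a m))
  rwa [length_v hm] at this

lemma Zseq_lt (hp : 2 ≤ w.length) {n : ℕ} (h : n < w.length - 1) :
    Zseq w a m n = w.getD n 0 := by
  rw [Zseq, wordThen]
  rw [if_pos (by rw [length_wordMinus (by omega)]; omega)]
  exact getD_wordMinus h

lemma Zseq_last (hp : 2 ≤ w.length) : Zseq w a m (w.length - 1) = 0 := by
  rw [Zseq, wordThen, if_pos (by rw [length_wordMinus (by omega)]; omega),
    getD_wordMinus_last (by omega)]

lemma Zseq_tail (hp : 2 ≤ w.length) (i : ℕ) : Zseq w a m (w.length + i) = Vseq a m i := by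
  rw [Zseq, wordThen, if_neg (by rw [length_wordMinus (by omega)]; omega),
    length_wordMinus (by omega)]
  congr 1
  omega

lemma Zseq_shift_tail (hp : 2 ≤ w.length) {n : ℕ} (h : w.length ≤ n) :
    shift^[n] (Zseq w a m) = shift^[n - w.length] (Vseq a m) := by
  funext i
  rw [shift_iter_apply, shift_iter_apply, ← Zseq_tail hp (n - w.length + i)]
  congr 1
  omega

lemma Zseq_le (hp : 2 ≤ w.length) (hm : 1 ≤ m) (hwb : ∀ c ∈ w, c ≤ 1)
    (ha1 : ∀ i, a i ≤ 1) (n : ℕ) : Zseq w a m n ≤ 1 := by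
  rcases Nat.lt_or_ge n (w.length - 1) with h | h
  · rw [Zseq_lt hp h]; exact lyndon_getD_le hwb n
  rcases Nat.eq_or_lt_of_le h with h' | h'
  · rw [← h', Zseq_last hp]; omega
  · have : n = w.length + (n - w.length) := by omega
    rw [this, Zseq_tail hp]
    exact Vseq_le hm ha1 _

lemma periodic_le (hwb : ∀ c ∈ w, c ≤ 1) (i : ℕ) : periodic w i ≤ 1 :=
  lyndon_getD_le hwb _

lemma periodic_add' (hp : 2 ≤ w.length) (i : ℕ) : periodic w (w.length + i) = periodic w i := by
  rw [Nat.add_comm, periodic_add]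

end Digits

section Structural

variable {a : ℕ → ℕ} {w : List ℕ} {m : ℕ}
  (hp : 2 ≤ w.length) (hwb : ∀ c ∈ w, c ≤ 1)
  (hrot : ∀ k, 0 < k → k < w.length → List.Lex (· < ·) w (w.rotate k))
  (hWa : ∀ n : ℕ, seqLt (shift^[n] (periodic w)) a)
  (ha1 : ∀ i, a i ≤ 1)
  (haq : ∀ n : ℕ, 1 ≤ n → seqLt (fun _ => 0) (shift^[n] a) ∧ seqLe (shift^[n] a) a)
  (hm1 : 1 ≤ m) (hm : seqLe (shift^[m] a) (periodic w))
  (hmin : ∀ n : ℕ, 1 ≤ n → seqLe (shift^[n] a) (periodic w) → m ≤ n)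

include ha1 haq in
lemma a_head : a 0 = 1 := by
  by_contra h
  have h0 : a 0 = 0 := by have := ha1 0; omega
  have hall : ∀ n, 1 ≤ n → a n = 0 := by
    intro n hn
    rcases (haq n hn).2 with ⟨d, hpre, hd⟩ | heq
    · rcases Nat.eq_zero_or_pos d with rfl | hd0
      · rw [shift_iter_apply] at hd; omega
      · have := hpre 0 hd0
        rw [shift_iter_apply, Nat.add_zero] at this
        omega
    · have := congrFun heq 0
      rw [shift_iter_apply, Nat.add_zero] at this
      omega
  obtain ⟨d, -, hd⟩ := (haq 1 le_rfl).1
  rw [shift_iter_apply] at hd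
  have := hall (1 + d) (by omega)
  omega

include hp hrot in
lemma W_min (t : ℕ) : seqLe (periodic w) (shift^[t] (periodic w)) := by
  rw [shift_periodic]
  set k := t % w.length with hk
  have hkp : k < w.length := Nat.mod_lt _ (by omega)
  rcases Nat.eq_zero_or_pos k with h0 | h0
  · rw [h0]; simp [seqLe_refl]
  · obtain ⟨j, hj, hpre, hd⟩ := lyndon_suffix hp hrot k h0 hkp
    refine Or.inl ⟨j, fun i hi => ?_, ?_⟩
    · rw [shift_iter_apply, periodic_of_lt (show i < w.length by omega),
        periodic_of_lt (show k + i < w.length by omega)]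
      exact hpre i hi
    · rw [shift_iter_apply, periodic_of_lt (show j < w.length by omega),
        periodic_of_lt (show k + j < w.length by omega)]
      exact hd

include hp hwb hrot hWa ha1 hm1 hm in
lemma m_ge_two : 2 ≤ m := by
  by_contra h
  have hm1' : m = 1 := by omega
  subst hm1'
  obtain ⟨e, hpre, hd⟩ := hWa (w.length - 1)
  rw [shift_iter_apply] at hd
  rcases Nat.eq_zero_or_pos e with rfl | he0
  · rw [Nat.add_zero, periodic_of_lt (by omega), lyndon_last_eq_one hp hrot hwb] at hd
    have := ha1 0
    omega
  · have hlt : seqLt (periodic w) (shift^[1] a) := by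
      refine ⟨e - 1, fun i hi => ?_, ?_⟩
      · have h1 := hpre (1 + i) (by omega)
        rw [shift_iter_apply] at h1
        have e1 : w.length - 1 + (1 + i) = w.length + i := by omega
        rw [e1, periodic_add' hp] at h1
        rw [shift_iter_apply]
        exact h1
      · have e1 : w.length - 1 + e = w.length + (e - 1) := by omega
        rw [e1, periodic_add' hp] at hd
        rw [shift_iter_apply]
        have e2 : 1 + (e - 1) = e := by omega
        rw [e2]
        exact hd
    exact seqLt_irrefl _ (seqLt_of_lt_of_le hlt hm)

include ha1 haq hmin hp hwb hrot in
lemma F2 : ∀ n < m, seqLt (periodic w) (shift^[n] a) := by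
  intro n hn
  rcases Nat.eq_zero_or_pos n with rfl | h0
  · refine ⟨0, by omega, ?_⟩
    rw [shift_iter_apply, Nat.add_zero, periodic_of_lt (by omega),
      lyndon_head_eq_zero hp hrot hwb, a_head ha1 haq]
    omega
  · rcases seq_trichotomy (shift^[n] a) (periodic w) with hlt | heq | hgt
    · exact absurd (hmin n h0 (Or.inl hlt)) (by omega)
    · exact absurd (hmin n h0 (Or.inr heq)) (by omega)
    · exact hgt

include hp hwb hrot hWa ha1 haq hm1 hm hmin in
lemma a_m1 : a (m - 1) = 1 := by
  have hm2 := m_ge_two hp hwb hrot hWa ha1 hm1 hm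
  by_contra h
  have h0 : a (m - 1) = 0 := by have := ha1 (m-1); omega
  obtain ⟨k, hpre, hd⟩ := F2 hp hwb hrot ha1 haq hmin (m - 1) (by omega)
  rw [shift_iter_apply] at hd
  rcases Nat.eq_zero_or_pos k with rfl | hk0
  · rw [Nat.add_zero, h0] at hd; omega
  · have hlt : seqLt (shift^[1] (periodic w)) (shift^[m] a) := by
      refine ⟨k - 1, fun i hi => ?_, ?_⟩
      · have h1 := hpre (1 + i) (by omega)
        rw [shift_iter_apply] at h1
        rw [shift_iter_apply, shift_iter_apply, h1]
        congr 1
        omega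
      · rw [shift_iter_apply, shift_iter_apply]
        have e1 : 1 + (k - 1) = k := by omega
        have e2 : m + (k - 1) = m - 1 + k := by omega
        rw [e1, e2]
        exact hd
    have := seqLt_of_le_of_lt (W_min hp hrot 1) (seqLt_of_lt_of_le hlt hm)
    exact seqLt_irrefl _ this

end Structural
section Claims

variable {a : ℕ → ℕ} {w : List ℕ} {m : ℕ}
  (hp : 2 ≤ w.length) (hwb : ∀ c ∈ w, c ≤ 1)
  (hrot : ∀ k, 0 < k → k < w.length → List.Lex (· < ·) w (w.rotate k))
  (hWa : ∀ n : ℕ, seqLt (shift^[n] (periodic w)) a)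
  (ha1 : ∀ i, a i ≤ 1)
  (haq : ∀ n : ℕ, 1 ≤ n → seqLt (fun _ => 0) (shift^[n] a) ∧ seqLe (shift^[n] a) a)
  (hm1 : 1 ≤ m) (hm : seqLe (shift^[m] a) (periodic w))
  (hmin : ∀ n : ℕ, 1 ≤ n → seqLe (shift^[n] a) (periodic w) → m ≤ n)

include hp hwb hrot hWa ha1 haq hm1 hm hmin in
lemma claimC : ∀ r, 1 ≤ r → r ≤ w.length - 1 →
    seqLe (shift^[r] (Zseq w a m)) (Vseq a m) := by
  have hm2 : 2 ≤ m := m_ge_two hp hwb hrot hWa ha1 hm1 hm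
  suffices H : ∀ s r, 1 ≤ r → r ≤ w.length - 1 → w.length - r ≤ s →
      seqLe (shift^[r] (Zseq w a m)) (Vseq a m) from
    fun r h1 h2 => H w.length r h1 h2 (by omega)
  intro s
  induction s with
  | zero => intro r h1 h2 h3; omega
  | succ s ih =>
    intro r h1 h2 h3
    obtain ⟨g, hpre, hd⟩ := hWa r
    rw [shift_iter_apply] at hd
    have hdg : a g = 1 ∧ periodic w (r + g) = 0 := by
      have := periodic_le hwb (r + g); have := ha1 g; omega
    have hpre2 : ∀ i < g, periodic w (r + i) = a i := by
      intro i hi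
      have h1 := hpre i hi
      rwa [shift_iter_apply] at h1
    -- g ≤ m - 1
    have hgm : g ≤ m - 1 := by
      by_contra hcon
      push_neg at hcon
      have hlt : seqLt (shift^[r + m] (periodic w)) (shift^[m] a) := by
        refine ⟨g - m, fun i hi => ?_, ?_⟩
        · rw [shift_iter_apply, shift_iter_apply]
          have h1 := hpre2 (m + i) (by omega)
          rw [← h1]
          congr 1
          omega
        · rw [shift_iter_apply, shift_iter_apply]
          have e1 : r + m + (g - m) = r + g := by omega
          have e2 : m + (g - m) = g := by omega
          rw [e1, e2, hdg.2, hdg.1]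
          omega
      exact seqLt_irrefl _
        (seqLt_of_le_of_lt (W_min hp hrot (r + m)) (seqLt_of_lt_of_le hlt hm))
    -- r + g ≠ p - 1
    have hgne : r + g ≠ w.length - 1 := by
      intro hcon
      have h1 := lyndon_last_eq_one hp hrot hwb
      have h2 := hdg.2
      rw [hcon, periodic_of_lt (by omega)] at h2
      omega
    -- prefix digits
    have hpre' : ∀ i, i < g → r + i < w.length - 1 → i < m - 1 →
        shift^[r] (Zseq w a m) i = Vseq a m i := by
      intro i hig hip him
      rw [shift_iter_apply, Zseq_lt hp hip, ← periodic_of_lt (show r + i < w.length by omega),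
        hpre2 i hig, Vseq_lt hm1 him]
    -- branch 3 : first difference at p - 1 - r
    have branch3 : w.length - 1 - r < g → seqLe (shift^[r] (Zseq w a m)) (Vseq a m) := by
      intro hcc
      have hcm : w.length - 1 - r < m - 1 := by omega
      refine Or.inl ⟨w.length - 1 - r, fun i hi => hpre' i (by omega) (by omega) (by omega), ?_⟩
      have e1 : r + (w.length - 1 - r) = w.length - 1 := by omega
      rw [shift_iter_apply, e1, Zseq_last hp, Vseq_lt hm1 hcm]
      have h1 := hpre2 (w.length - 1 - r) hcc
      rw [e1, periodic_of_lt (by omega), lyndon_last_eq_one hp hrot hwb] at h1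
      omega
    rcases Nat.lt_or_ge g (m - 1) with hg | hg
    · rcases Nat.lt_trichotomy (r + g) (w.length - 1) with hc | hc | hc
      · refine Or.inl ⟨g, fun i hi => hpre' i hi (by omega) (by omega), ?_⟩
        rw [shift_iter_apply, Zseq_lt hp hc, ← periodic_of_lt (show r + g < w.length by omega),
          hdg.2, Vseq_lt hm1 hg, hdg.1]
        omega
      · exact absurd hc hgne
      · exact branch3 (by omega)
    · have hg' : g = m - 1 := by omega
      rcases Nat.lt_trichotomy (r + g) (w.length - 1) with hc | hc | hc
      · -- recursion
        refine seqLe_of_agree_shift m (fun i hi => ?_) ?_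
        · rcases Nat.lt_or_ge i (m - 1) with hi' | hi'
          · exact hpre' i (by omega) (by omega) hi'
          · have hie : i = m - 1 := by omega
            subst hie
            rw [shift_iter_apply, Zseq_lt hp (by omega),
              ← periodic_of_lt (show r + (m - 1) < w.length by omega)]
            have e1 : r + (m - 1) = r + g := by omega
            rw [e1, hdg.2, Vseq_last hm1]
        · rw [← Function.iterate_add_apply shift m r, Vseq_shift_len hm1]
          exact ih (m + r) (by omega) (by omega) (by omega)
      · exact absurd hc hgne
      · exact branch3 (by omega)

include hp hwb hrot hWa ha1 haq hm1 hm hmin in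
lemma claimD : ∀ k < m, seqLe (Zseq w a m) (shift^[k] (Vseq a m)) := by
  have hm2 : 2 ≤ m := m_ge_two hp hwb hrot hWa ha1 hm1 hm
  have ham1 : a (m - 1) = 1 := a_m1 hp hwb hrot hWa ha1 haq hm1 hm hmin
  intro k hk
  rcases Nat.eq_zero_or_pos k with rfl | hk0
  · refine Or.inl ⟨0, by omega, ?_⟩
    rw [Function.iterate_zero_apply, Zseq_lt hp (by omega), lyndon_head_eq_zero hp hrot hwb,
      Vseq_lt hm1 (by omega), a_head ha1 haq]
    omega
  · obtain ⟨e, hpre, hd⟩ := F2 hp hwb hrot ha1 haq hmin k hk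
    rw [shift_iter_apply] at hd
    have hdg : periodic w e = 0 ∧ a (k + e) = 1 := by
      have := periodic_le hwb e; have := ha1 (k + e); omega
    have hpre2 : ∀ i < e, periodic w i = a (k + i) := by
      intro i hi
      have h1 := hpre i hi
      rwa [shift_iter_apply] at h1
    -- e ≤ m - 1 - k
    have heq' : e ≤ m - 1 - k := by
      by_contra hcon
      push_neg at hcon
      have hlt : seqLt (shift^[m - 1 - k + 1] (periodic w)) (shift^[m] a) := by
        refine ⟨e - (m - 1 - k) - 1, fun i hi => ?_, ?_⟩
        · rw [shift_iter_apply, shift_iter_apply]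
          have h1 := hpre2 (m - 1 - k + 1 + i) (by omega)
          rw [h1]
          congr 1
          omega
        · rw [shift_iter_apply, shift_iter_apply]
          have e1 : m - 1 - k + 1 + (e - (m - 1 - k) - 1) = e := by omega
          have e2 : m + (e - (m - 1 - k) - 1) = k + e := by omega
          rw [e1, e2, hdg.1, hdg.2]
          omega
      exact seqLt_irrefl _
        (seqLt_of_le_of_lt (W_min hp hrot _) (seqLt_of_lt_of_le hlt hm))
    have hpreZ : ∀ i, i < e → i < w.length - 1 →
        Zseq w a m i = shift^[k] (Vseq a m) i := by
      intro i hie hip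
      rw [shift_iter_apply, Zseq_lt hp hip, ← periodic_of_lt (show i < w.length by omega),
        hpre2 i hie, Vseq_lt hm1 (by omega)]
    rcases Nat.lt_or_ge e (m - 1 - k) with he | he
    · rcases Nat.lt_or_ge e (w.length - 1) with hep | hep
      · refine Or.inl ⟨e, fun i hi => hpreZ i hi (by omega), ?_⟩
        rw [shift_iter_apply, Zseq_lt hp hep, ← periodic_of_lt (show e < w.length by omega),
          hdg.1, Vseq_lt hm1 (by omega), hdg.2]
        omega
      · refine Or.inl ⟨w.length - 1, fun i hi => hpreZ i (by omega) hi, ?_⟩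
        rw [shift_iter_apply, Zseq_last hp, Vseq_lt hm1 (by omega)]
        rcases Nat.eq_or_lt_of_le hep with he' | he'
        · rw [he', hdg.2]
          omega
        · have h1 := hpre2 (w.length - 1) he'
          rw [periodic_of_lt (by omega), lyndon_last_eq_one hp hrot hwb] at h1
          omega
    · have he' : e = m - 1 - k := by omega
      rcases Nat.lt_trichotomy e (w.length - 1) with hc | hc | hc
      · refine seqLe_of_agree_shift (e + 1) (fun i hi => ?_) ?_
        · rcases Nat.lt_or_ge i e with hi' | hi'
          · exact hpreZ i hi' (by omega)
          · have hie : i = e := by omega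
            subst hie
            rw [shift_iter_apply, Zseq_lt hp (by omega),
              ← periodic_of_lt (show i < w.length by omega), hdg.1]
            have e1 : k + i = m - 1 := by omega
            rw [e1, Vseq_last hm1]
        · rw [← Function.iterate_add_apply shift (e + 1) k]
          have e2 : e + 1 + k = m := by omega
          rw [e2, Vseq_shift_len hm1]
          exact claimC hp hwb hrot hWa ha1 haq hm1 hm hmin (e + 1) (by omega) (by omega)
      · refine seqLe_of_agree_shift (e + 1) (fun i hi => ?_) ?_
        · rcases Nat.lt_or_ge i e with hi' | hi'
          · exact hpreZ i hi' (by omega)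
          · have hie : i = e := by omega
            subst hie
            rw [shift_iter_apply]
            have e1 : i = w.length - 1 := by omega
            have e2 : k + i = m - 1 := by omega
            rw [e1, Zseq_last hp]
            rw [show k + (w.length - 1) = m - 1 by omega, Vseq_last hm1]
        · rw [← Function.iterate_add_apply shift (e + 1) k]
          have e2 : e + 1 + k = m := by omega
          have e3 : e + 1 = w.length := by omega
          rw [e2, Vseq_shift_len hm1, e3, Zseq_shift_tail hp le_rfl, Nat.sub_self,
            Function.iterate_zero]
          exact seqLe_refl _
      · refine Or.inl ⟨w.length - 1, fun i hi => hpreZ i (by omega) hi, ?_⟩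
        rw [shift_iter_apply, Zseq_last hp, Vseq_lt hm1 (by omega)]
        have h1 := hpre2 (w.length - 1) (by omega)
        rw [periodic_of_lt (by omega), lyndon_last_eq_one hp hrot hwb] at h1
        omega

include hp hwb hrot hWa ha1 haq hm1 hm hmin in
lemma claimB : ∀ n, seqLe (Zseq w a m) (shift^[n] (Zseq w a m)) := by
  intro n
  rcases Nat.eq_zero_or_pos n with rfl | hn0
  · rw [Function.iterate_zero]; exact seqLe_refl _
  rcases Nat.lt_or_ge n w.length with hnp | hnp
  · obtain ⟨j, hj, hpre, hd⟩ := lyndon_suffix hp hrot n hn0 hnp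
    rcases Nat.lt_or_ge j (w.length - 1 - n) with hc | hc
    · refine Or.inl ⟨j, fun i hi => ?_, ?_⟩
      · rw [shift_iter_apply, Zseq_lt hp (by omega), Zseq_lt hp (by omega)]
        exact hpre i hi
      · rw [shift_iter_apply, Zseq_lt hp (by omega), Zseq_lt hp (by omega)]
        exact hd
    · have hje : j = w.length - 1 - n := by omega
      have hwj : w.getD j 0 = 0 := by
        have h1 : n + j = w.length - 1 := by omega
        have h2 := lyndon_last_eq_one hp hrot hwb
        have h3 := lyndon_getD_le hwb j
        rw [h1, h2] at hd
        omega
      refine seqLe_of_agree_shift (j + 1) (fun i hi => ?_) ?_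
      · rcases Nat.lt_or_ge i j with hi' | hi'
        · rw [shift_iter_apply, Zseq_lt hp (by omega), Zseq_lt hp (by omega)]
          exact hpre i hi'
        · have hie : i = j := by omega
          subst hie
          rw [shift_iter_apply, Zseq_lt hp (by omega), hwj,
            show n + i = w.length - 1 by omega, Zseq_last hp]
      · rw [← Function.iterate_add_apply shift (j + 1) n,
          show j + 1 + n = w.length by omega, Zseq_shift_tail hp le_rfl, Nat.sub_self,
          Function.iterate_zero]
        exact claimC hp hwb hrot hWa ha1 haq hm1 hm hmin (j + 1) (by omega) (by omega)
  · rw [Zseq_shift_tail hp hnp, Vseq_shift_mod hm1]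
    exact claimD hp hwb hrot hWa ha1 haq hm1 hm hmin ((n - w.length) % m)
      (Nat.mod_lt _ (by omega))

include hp hwb hrot hWa ha1 haq hm1 hm hmin in
lemma claimA : ∀ n, seqLt (shift^[n] (Zseq w a m)) a := by
  have hm2 : 2 ≤ m := m_ge_two hp hwb hrot hWa ha1 hm1 hm
  have ham1 : a (m - 1) = 1 := a_m1 hp hwb hrot hWa ha1 haq hm1 hm hmin
  intro n
  rcases Nat.lt_or_ge n w.length with hnp | hnp
  · refine seqLt_trans (y := shift^[n] (periodic w)) ⟨w.length - 1 - n, fun i hi => ?_, ?_⟩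
      (hWa n)
    · rw [shift_iter_apply, shift_iter_apply, Zseq_lt hp (by omega),
        periodic_of_lt (by omega)]
    · rw [shift_iter_apply, shift_iter_apply, show n + (w.length - 1 - n) = w.length - 1
        by omega, Zseq_last hp, periodic_of_lt (by omega), lyndon_last_eq_one hp hrot hwb]
      omega
  · rw [Zseq_shift_tail hp hnp, Vseq_shift_mod hm1]
    set k := (n - w.length) % m with hkdef
    have hk : k < m := Nat.mod_lt _ (by omega)
    rcases Nat.eq_zero_or_pos k with hk0 | hk0
    · rw [hk0, Function.iterate_zero]
      refine ⟨m - 1, fun i hi => ?_, ?_⟩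
      · show Vseq a m i = a i
        exact Vseq_lt hm1 hi
      · show Vseq a m (m - 1) < a (m - 1)
        rw [Vseq_last hm1, ham1]
        omega
    · refine seqLt_of_lt_of_le (y := shift^[k] a) ⟨m - 1 - k, fun i hi => ?_, ?_⟩
        (haq k (by omega)).2
      · rw [shift_iter_apply, shift_iter_apply]
        exact Vseq_lt hm1 (by omega)
      · rw [shift_iter_apply, shift_iter_apply, show k + (m - 1 - k) = m - 1 by omega,
          Vseq_last hm1, ham1]
        omega

end Claims
/-- The left endpoint of an extended `β`-Lyndon interval that is not a
`β`-Lyndon interval belongs to `𝓔_β`. -/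
theorem EBLI_left_endpoint_mem_Eset (β : ℝ) (hβ : β ∈ Set.Ioc (1 : ℝ) 2)
    (a : ℕ → ℕ) (ha : IsQuasiGreedy β a)
    (w : List ℕ) (hw : IsBetaLyndon a w)
    (m : ℕ) (hm1 : 1 ≤ m) (hm : seqLe (shift^[m] a) (periodic w))
    (hmin : ∀ n : ℕ, 1 ≤ n → seqLe (shift^[n] a) (periodic w) → m ≤ n) :
    piBeta β (wordThen (wordMinus w) (periodic (wordMinus (prefixWord a m)))) ∈
      Eset β := by
  obtain ⟨hβ1, hβ2⟩ := hβ
  obtain ⟨ha1, hpa, haq⟩ := ha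
  obtain ⟨⟨hp, hwb, hrot⟩, hWa⟩ := hw
  have hb0 : (0:ℝ) < β := by linarith
  -- the target value is `piBeta β Z`
  have hZdef : wordThen (wordMinus w) (periodic (wordMinus (prefixWord a m))) = Zseq w a m := rfl
  rw [hZdef]
  set Z := Zseq w a m with hZ
  have hA := claimA hp hwb hrot hWa ha1 haq hm1 hm hmin
  have hB := claimB hp hwb hrot hWa ha1 haq hm1 hm hmin
  have hZb : ∀ i, Z i ≤ 1 := Zseq_le hp hm1 hwb ha1
  -- admissibility of all shifts of Z
  have hshifts : ∀ d, ∀ n : ℕ, seqLe (shift^[n] (shift^[d] Z)) a := by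
    intro d n
    rw [← Function.iterate_add_apply]
    exact Or.inl (hA (n + d))
  have haq1 : ∀ n : ℕ, 1 ≤ n → seqLt (fun _ => 0) (shift^[n] a) := fun n hn => (haq n hn).1
  -- every shifted value is in [0, 1)
  have ht0 : ∀ d, 0 ≤ piBeta β (shift^[d] Z) := fun d => pi_nonneg _ hb0
  have ht1 : ∀ d, piBeta β (shift^[d] Z) < 1 := by
    intro d
    refine pi_lt_one hβ1 ha1 hpa (shift_bound hZb d) haq1 (fun n => ?_)
    rw [← Function.iterate_add_apply]
    exact hA (n + d)
  -- iteration of the β-transformation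
  have hstep : ∀ d, Tbeta β (piBeta β (shift^[d] Z)) = piBeta β (shift^[d+1] Z) := by
    intro d
    have h1 := pi_shift hβ1 (shift^[d] Z) (shift_bound hZb d)
    rw [shift_iter_apply, Nat.add_zero, ← Function.iterate_succ_apply' shift d Z] at h1
    have h2 : β * piBeta β (shift^[d] Z) = (Z d : ℝ) + piBeta β (shift^[d+1] Z) := by
      rw [h1]
      field_simp
    rw [Tbeta, h2]
    have h3 : ((Z d : ℕ) : ℝ) = ((Z d : ℤ) : ℝ) := by push_cast; ring
    rw [h3, Int.fract_intCast_add, Int.fract_eq_self.mpr ⟨ht0 (d+1), ht1 (d+1)⟩]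
  have hiter : ∀ n, (Tbeta β)^[n] (piBeta β Z) = piBeta β (shift^[n] Z) := by
    intro n
    induction n with
    | zero => simp
    | succ n ih => rw [Function.iterate_succ_apply', ih, hstep]
  -- monotonicity along the orbit
  have hmono : ∀ n, piBeta β Z ≤ piBeta β (shift^[n] Z) := by
    intro n
    refine pi_le_of_seqLe hβ1 ha1 hpa hZb (shift_bound hZb n) (fun j => ?_) (hB n)
    have := hshifts 0 j
    rwa [Function.iterate_zero_apply] at this
  have htZ0 : 0 ≤ piBeta β Z := pi_nonneg _ hb0
  have htZ1 : piBeta β Z < 1 := by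
    have := ht1 0
    rwa [Function.iterate_zero_apply] at this
  -- membership in the bifurcation set
  refine ⟨⟨htZ0, htZ1⟩, fun t' ht' heq => ?_⟩
  have hmem : piBeta β Z ∈ Kset β (piBeta β Z) :=
    ⟨⟨htZ0, htZ1⟩, fun n => by rw [hiter n]; exact hmono n⟩
  rw [← heq] at hmem
  have := hmem.2 0
  rw [Function.iterate_zero_apply] at this
  exact absurd ht'.1 (by linarith)

end
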